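/- The Godbillon–Vey map ω̄(f d/dx, g d/dx, h d/dx) = (1/2)·det[[f(0), g(0), h(0)], [f'(0), g'(0), h'(0)], [f''(0), g''(0), h''(0)]] is a Lie algebra 3-cocycle on W₁ with values in the trivial module ℂ: it is alternating and its Chevalley–Eilenberg coboundary vanishes. -/
import Mathlib


open Polynomial

namespace Stmt10

/-- The bracket of the Lie algebra `W₁` of polynomial vector fields,
identifying `f(x) d/dx` with the polynomial `f`. -/
noncomputable def W1bracket (f g : Polynomial ℂ) : Polynomial ℂ :=
  f * derivative g - derivative f * g

/-- The Godbillon–Vey 3-cochain on `W₁` with values in the trivial module `ℂ`: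
`ω̄(f,g,h) = (1/2)·det [[f(0),g(0),h(0)],[f'(0),g'(0),h'(0)],[f''(0),g''(0),h''(0)]]`. -/
noncomputable def gv (f g h : Polynomial ℂ) : ℂ :=
  ((1 : ℂ)/2) *
    (Matrix.det !![f.eval 0, g.eval 0, h.eval 0;
                   (derivative f).eval 0, (derivative g).eval 0, (derivative h).eval 0;
                   (derivative (derivative f)).eval 0, (derivative (derivative g)).eval 0,
                     (derivative (derivative h)).eval 0])


private lemma b0 (f g : Polynomial ℂ) :
    (W1bracket f g).eval 0 =
      f.eval 0 * (derivative g).eval 0 - (derivative f).eval 0 * g.eval 0 := by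
  simp [W1bracket]

private lemma b1 (f g : Polynomial ℂ) :
    (derivative (W1bracket f g)).eval 0 =
      f.eval 0 * (derivative (derivative g)).eval 0
        - (derivative (derivative f)).eval 0 * g.eval 0 := by
  simp [W1bracket, derivative_mul]; ring

private lemma b2 (f g : Polynomial ℂ) :
    (derivative (derivative (W1bracket f g))).eval 0 =
      f.eval 0 * (derivative (derivative (derivative g))).eval 0
        + (derivative f).eval 0 * (derivative (derivative g)).eval 0
        - (derivative (derivative f)).eval 0 * (derivative g).eval 0
        - (derivative (derivative (derivative f))).eval 0 * g.eval 0 := by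
  simp [W1bracket, derivative_mul]; ring

private lemma gv_eq (f g h : Polynomial ℂ) :
    gv f g h = ((1 : ℂ)/2) *
      (f.eval 0 * (derivative g).eval 0 * (derivative (derivative h)).eval 0
        - f.eval 0 * (derivative h).eval 0 * (derivative (derivative g)).eval 0
        - g.eval 0 * (derivative f).eval 0 * (derivative (derivative h)).eval 0
        + g.eval 0 * (derivative h).eval 0 * (derivative (derivative f)).eval 0
        + h.eval 0 * (derivative f).eval 0 * (derivative (derivative g)).eval 0
        - h.eval 0 * (derivative g).eval 0 * (derivative (derivative f)).eval 0) := by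
  rw [gv, Matrix.det_fin_three]; simp [Matrix.cons_val_zero, Matrix.cons_val_one]

/-- The Godbillon–Vey map is a Lie algebra 3-cocycle on `W₁` with values in the
trivial module `ℂ`: it is alternating and its Chevalley–Eilenberg coboundary
`(δω)(X₁,X₂,X₃,X₄) = Σ_{i<j} (−1)^{i+j} ω([X_i,X_j], X₁,…,X̂_i,…,X̂_j,…,X₄)`
vanishes. -/
theorem gv_is_three_cocycle :
    (∀ f g h : Polynomial ℂ, gv f g h = - gv g f h) ∧
    (∀ f g h : Polynomial ℂ, gv f g h = - gv f h g) ∧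
    (∀ X₁ X₂ X₃ X₄ : Polynomial ℂ,
      - gv (W1bracket X₁ X₂) X₃ X₄
      + gv (W1bracket X₁ X₃) X₂ X₄
      - gv (W1bracket X₁ X₄) X₂ X₃
      - gv (W1bracket X₂ X₃) X₁ X₄
      + gv (W1bracket X₂ X₄) X₁ X₃
      - gv (W1bracket X₃ X₄) X₁ X₂ = 0) := by
  refine ⟨fun f g h => ?_, fun f g h => ?_, fun X₁ X₂ X₃ X₄ => ?_⟩ <;>
    simp only [gv_eq, b0, b1, b2] <;> ring

end Stmt10
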